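/- arXiv:2604.19669 — 4 statements merged into one kernel-verified Lean document; each statement's English description precedes it below -/
import Mathlib

section
/- Let h : ℝⁿ → ℝᵐ and g : ℝⁿ → ℝ^q be differentiable, let bˡ, bᵘ ∈ ℝ^q with bˡ ≤ bᵘ componentwise, and define the constraint residual r : ℝⁿ → ℝ^{m+q} by stacking h(y) with the vector whose j-th entry is max(0, gⱼ(y) − bᵘⱼ) − max(0, bˡⱼ − gⱼ(y)). Define the violation energy V(y) = (1/2)‖r(y)‖². Then V is differentiable everywhere and ∇V(y) = J(y)ᵀ r(y), where J(y) ∈ ℝ^{(m+q)×n} is the Jacobian of the stacked constraint vector c(y) = (h(y), g(y)). -/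
open Matrix

lemma hasDerivAt_half_sq_max (t : ℝ) :
    HasDerivAt (fun s : ℝ => max 0 s ^ 2 / 2) (max 0 t) t := by
  rcases lt_trichotomy t 0 with ht | ht | ht
  · have heq : (fun s : ℝ => max 0 s ^ 2 / 2) =ᶠ[nhds t] fun _ => (0 : ℝ) := by
      filter_upwards [Iio_mem_nhds ht] with s hs
      rw [max_eq_left (le_of_lt (Set.mem_Iio.mp hs))]; norm_num
    have : HasDerivAt (fun _ : ℝ => (0 : ℝ)) 0 t := hasDerivAt_const t 0
    rw [max_eq_left (le_of_lt ht)]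
    exact this.congr_of_eventuallyEq heq
  · subst ht
    rw [max_self]
    rw [hasDerivAt_iff_isLittleO]
    simp only [sub_zero, smul_zero, sub_zero, max_self, ne_eq, OfNat.ofNat_ne_zero,
      not_false_eq_true, zero_pow, zero_div]
    rw [Asymptotics.isLittleO_iff]
    intro c hc
    filter_upwards [Metric.ball_mem_nhds (0 : ℝ) (by positivity : (0:ℝ) < 2 * c)] with s hs
    rw [Metric.mem_ball, Real.dist_eq, sub_zero] at hs
    have h1 : max 0 s ^ 2 ≤ |s| ^ 2 := by
      have hms : max 0 s ≤ |s| := max_le (abs_nonneg s) (le_abs_self s)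
      exact pow_le_pow_left₀ (le_max_left 0 s) hms 2
    have : ‖max 0 s ^ 2 / 2‖ ≤ |s| ^ 2 / 2 := by
      rw [Real.norm_eq_abs, abs_div, abs_of_nonneg (by positivity : (0:ℝ) ≤ max 0 s ^ 2)]
      simp only [abs_two]
      linarith
    calc ‖max 0 s ^ 2 / 2‖ ≤ |s| ^ 2 / 2 := this
      _ = |s| * |s| / 2 := by ring
      _ ≤ (2 * c) * |s| / 2 := by nlinarith [abs_nonneg s]
      _ = c * ‖s‖ := by rw [Real.norm_eq_abs]; ring
  · have heq : (fun s : ℝ => max 0 s ^ 2 / 2) =ᶠ[nhds t] fun s => s ^ 2 / 2 := by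
      filter_upwards [Ioi_mem_nhds ht] with s hs
      rw [max_eq_right (le_of_lt (Set.mem_Ioi.mp hs))]
    have : HasDerivAt (fun s : ℝ => s ^ 2 / 2) t t := by
      have := (hasDerivAt_pow 2 t).div_const 2
      simpa using this
    rw [max_eq_right (le_of_lt ht)]
    exact this.congr_of_eventuallyEq heq

lemma hasDerivAt_psi (l u : ℝ) (hlu : l ≤ u) (t : ℝ) :
    HasDerivAt (fun s : ℝ => (1/2) * (max 0 (s - u) - max 0 (l - s)) ^ 2)
      (max 0 (t - u) - max 0 (l - t)) t := by
  have key : ∀ s : ℝ, (1/2) * (max 0 (s - u) - max 0 (l - s)) ^ 2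
      = max 0 (s - u) ^ 2 / 2 + max 0 (l - s) ^ 2 / 2 := by
    intro s
    rcases le_total s u with hs | hs
    · rw [max_eq_left (by linarith : s - u ≤ 0)]; ring
    · rw [max_eq_left (by linarith : l - s ≤ 0)]; ring
  simp only [key]
  have h1 : HasDerivAt (fun s : ℝ => max 0 (s - u) ^ 2 / 2) (max 0 (t - u)) t := by
    have := (hasDerivAt_half_sq_max (t - u)).comp t ((hasDerivAt_id t).sub_const u)
    simpa [Function.comp_def] using this
  have h2 : HasDerivAt (fun s : ℝ => max 0 (l - s) ^ 2 / 2) (-(max 0 (l - t))) t := by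
    have := (hasDerivAt_half_sq_max (l - t)).comp t ((hasDerivAt_const t l).sub (hasDerivAt_id t))
    simpa [Function.comp_def] using this
  have h3 := h1.add h2; rw [← sub_eq_add_neg] at h3; exact h3

/-- The violation energy `V(y) = (1/2)‖r(y)‖²` of the constraint residual is
differentiable with gradient `∇V(y) = J(y)ᵀ r(y)`, where `J(y)` is the Jacobian of the
stacked constraint vector `c(y) = (h(y), g(y))`. -/
theorem violation_energy_gradient {n m q : ℕ}
    (h : EuclideanSpace ℝ (Fin n) → EuclideanSpace ℝ (Fin m))
    (g : EuclideanSpace ℝ (Fin n) → EuclideanSpace ℝ (Fin q))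
    (hh : Differentiable ℝ h) (hg : Differentiable ℝ g)
    (bl bu : Fin q → ℝ) (hb : ∀ j, bl j ≤ bu j)
    (r : EuclideanSpace ℝ (Fin n) → EuclideanSpace ℝ (Fin (m + q)))
    (hr : ∀ y, r y = (WithLp.equiv 2 (Fin (m + q) → ℝ)).symm
        (Fin.append (fun i => h y i)
          (fun j => max 0 (g y j - bu j) - max 0 (bl j - g y j))))
    (V : EuclideanSpace ℝ (Fin n) → ℝ)
    (hV : ∀ y, V y = (1 / 2) * ‖r y‖ ^ 2)
    (c : EuclideanSpace ℝ (Fin n) → EuclideanSpace ℝ (Fin (m + q)))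
    (hc : ∀ y, c y = (WithLp.equiv 2 (Fin (m + q) → ℝ)).symm
        (Fin.append (fun i => h y i) (fun j => g y j)))
    (J : EuclideanSpace ℝ (Fin n) → Matrix (Fin (m + q)) (Fin n) ℝ)
    (hJ : ∀ y, HasFDerivAt c
        (LinearMap.toContinuousLinearMap (Matrix.toEuclideanLin (J y))) y) :
    ∀ y, HasGradientAt V (Matrix.toEuclideanLin (J y)ᵀ (r y)) y := by
  intro y
  set Dc : EuclideanSpace ℝ (Fin n) →L[ℝ] EuclideanSpace ℝ (Fin (m + q)) :=
    LinearMap.toContinuousLinearMap (Matrix.toEuclideanLin (J y)) with hDc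
  -- component values of r and c
  have hrk : ∀ z i, r z (Fin.castAdd q i) = h z i := by
    intro z i
    rw [hr z, WithLp.equiv_symm_apply, PiLp.toLp_apply, Fin.append_left]
  have hrk2 : ∀ z j, r z (Fin.natAdd m j) = max 0 (g z j - bu j) - max 0 (bl j - g z j) := by
    intro z j
    rw [hr z, WithLp.equiv_symm_apply, PiLp.toLp_apply, Fin.append_right]
  have hck : ∀ z i, c z (Fin.castAdd q i) = h z i := by
    intro z i
    rw [hc z, WithLp.equiv_symm_apply, PiLp.toLp_apply, Fin.append_left]
  have hck2 : ∀ z j, c z (Fin.natAdd m j) = g z j := by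
    intro z j
    rw [hc z, WithLp.equiv_symm_apply, PiLp.toLp_apply, Fin.append_right]
  -- rewrite V as a sum
  have hVsum : ∀ z, V z = (∑ i : Fin m, (c z (Fin.castAdd q i)) ^ 2 / 2)
      + ∑ j : Fin q, (1/2) * (max 0 (c z (Fin.natAdd m j) - bu j)
          - max 0 (bl j - c z (Fin.natAdd m j))) ^ 2 := by
    intro z
    have hnorm : ‖r z‖ ^ 2 = ∑ k, (r z k) ^ 2 := by
      rw [EuclideanSpace.norm_eq, Real.sq_sqrt (by positivity)]
      exact Finset.sum_congr rfl fun k _ => by rw [Real.norm_eq_abs, sq_abs]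
    rw [hV z, hnorm, Finset.mul_sum, Fin.sum_univ_add]
    congr 1
    · exact Finset.sum_congr rfl fun i _ => by rw [hrk z i, ← hck z i]; ring
    · exact Finset.sum_congr rfl fun j _ => by rw [hrk2 z j, hck2 z j]
  -- component fderivs of c
  have hcomp : ∀ k : Fin (m + q), HasFDerivAt (fun z => c z k)
      ((EuclideanSpace.proj k).comp Dc) y := by
    intro k
    have h1 : HasFDerivAt (⇑(EuclideanSpace.proj (𝕜 := ℝ) k) ∘ c)
        ((EuclideanSpace.proj k).comp Dc) y :=
      (EuclideanSpace.proj k).hasFDerivAt.comp y (hJ y)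
    exact h1
  -- fderiv of V
  have hVF : HasFDerivAt V
      ((∑ i : Fin m, (r y (Fin.castAdd q i)) • ((EuclideanSpace.proj (Fin.castAdd q i)).comp Dc))
      + ∑ j : Fin q, (r y (Fin.natAdd m j)) • ((EuclideanSpace.proj (Fin.natAdd m j)).comp Dc)) y := by
    have e1 : HasFDerivAt (fun z => ∑ i : Fin m, (c z (Fin.castAdd q i)) ^ 2 / 2)
        (∑ i : Fin m, (r y (Fin.castAdd q i)) • ((EuclideanSpace.proj (Fin.castAdd q i)).comp Dc)) y := by
      apply HasFDerivAt.fun_sum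
      intro i _
      have hs : HasDerivAt (fun s : ℝ => s ^ 2 / 2) (c y (Fin.castAdd q i)) (c y (Fin.castAdd q i)) := by
        simpa using (hasDerivAt_pow 2 (c y (Fin.castAdd q i))).div_const 2
      have := hs.comp_hasFDerivAt y (hcomp (Fin.castAdd q i))
      rw [hck y i, ← hrk y i] at this
      exact this
    have e2 : HasFDerivAt (fun z => ∑ j : Fin q, (1/2) * (max 0 (c z (Fin.natAdd m j) - bu j)
          - max 0 (bl j - c z (Fin.natAdd m j))) ^ 2)
        (∑ j : Fin q, (r y (Fin.natAdd m j)) • ((EuclideanSpace.proj (Fin.natAdd m j)).comp Dc)) y := by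
      apply HasFDerivAt.fun_sum
      intro j _
      have hs := hasDerivAt_psi (bl j) (bu j) (hb j) (c y (Fin.natAdd m j))
      have := hs.comp_hasFDerivAt y (hcomp (Fin.natAdd m j))
      rw [hck2 y j, ← hrk2 y j] at this
      exact this
    have := e1.add e2
    exact this.congr_of_eventuallyEq (Filter.Eventually.of_forall fun z => (hVsum z))
  rw [hasGradientAt_iff_hasFDerivAt]
  have hEq : (InnerProductSpace.toDual ℝ (EuclideanSpace ℝ (Fin n)))
      (Matrix.toEuclideanLin (J y)ᵀ (r y)) =
      (∑ i : Fin m, (r y (Fin.castAdd q i)) • ((EuclideanSpace.proj (Fin.castAdd q i)).comp Dc))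
      + ∑ j : Fin q, (r y (Fin.natAdd m j)) • ((EuclideanSpace.proj (Fin.natAdd m j)).comp Dc) := by
    ext v
    simp only [InnerProductSpace.toDual_apply_apply, ContinuousLinearMap.add_apply,
      ContinuousLinearMap.coe_sum', Finset.sum_apply, ContinuousLinearMap.coe_smul',
      Pi.smul_apply, ContinuousLinearMap.coe_comp', Function.comp_apply, smul_eq_mul]
    have hDcv : ∀ k, Dc v k = ∑ l, J y k l * v l := by
      intro k
      rw [hDc]
      simp only [LinearMap.coe_toContinuousLinearMap']
      rw [Matrix.toEuclideanLin_apply, PiLp.toLp_apply]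
      simp [Matrix.mulVec, dotProduct]
    have hgrad : ∀ l, (Matrix.toEuclideanLin (J y)ᵀ (r y)) l = ∑ k, J y k l * r y k := by
      intro l
      rw [Matrix.toEuclideanLin_apply, PiLp.toLp_apply]
      simp [Matrix.mulVec, dotProduct, Matrix.transpose_apply]
    have hfinal : (inner ℝ (Matrix.toEuclideanLin (J y)ᵀ (r y)) v : ℝ)
        = ∑ k, r y k * Dc v k := by
      rw [PiLp.inner_apply]
      simp only [RCLike.inner_apply, conj_trivial]
      conv_lhs => enter [2, l]; rw [mul_comm]
      calc ∑ l, (Matrix.toEuclideanLin (J y)ᵀ) (r y) l * v l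
          = ∑ l, ∑ k, J y k l * r y k * v l := by
            refine Finset.sum_congr rfl fun l _ => ?_
            rw [hgrad l, Finset.sum_mul]
        _ = ∑ k, ∑ l, J y k l * r y k * v l := Finset.sum_comm
        _ = ∑ k, r y k * Dc v k := by
            refine Finset.sum_congr rfl fun k _ => ?_
            rw [hDcv k, Finset.mul_sum]
            exact Finset.sum_congr rfl fun l _ => by ring
    rw [hfinal, Fin.sum_univ_add (f := fun k => r y k * Dc v k)]
    rfl
  rw [hEq]
  exact hVF
end

section
/- Let H be a real symmetric positive semidefinite p × p matrix all of whose eigenvalues lie in [0, G²], let L > 0, ε > L/2, and let r ∈ ℝᵖ. Then rᵀH(H + εI)⁻¹r − (L/2)·rᵀ(H + εI)⁻¹H(H + εI)⁻¹r ≥ c(ε)·rᵀHr, where c(ε) := min{ 1/ε − L/(2ε²), 1/(ε+G²) − L/(2(ε+G²)²) }. -/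
open Matrix

-- scalar interval lemma
lemma g_interval {L a b x : ℝ} (ha : 0 < a) (hax : a ≤ x) (hxb : x ≤ b) :
    min (1/a - L/(2*a^2)) (1/b - L/(2*b^2)) ≤ 1/x - L/(2*x^2) := by
  have hx : 0 < x := lt_of_lt_of_le ha hax
  have hb : 0 < b := lt_of_lt_of_le hx hxb
  rcases le_total x L with hxL | hLx
  · refine le_trans (min_le_left _ _) ?_
    have key : (1/x - L/(2*x^2)) - (1/a - L/(2*a^2))
        = (x-a)*(L*x + L*a - 2*a*x)/(2*a^2*x^2) := by
      field_simp; ring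
    have hnum : 0 ≤ (x-a)*(L*x + L*a - 2*a*x) := by
      have h2 : 0 ≤ L*x + L*a - 2*a*x := by
        nlinarith [mul_nonneg hx.le (by linarith : (0:ℝ) ≤ L - a),
          mul_nonneg ha.le (by linarith : (0:ℝ) ≤ L - x)]
      exact mul_nonneg (by linarith) h2
    have : 0 ≤ (x-a)*(L*x + L*a - 2*a*x)/(2*a^2*x^2) := by positivity
    linarith [key ▸ this]
  · refine le_trans (min_le_right _ _) ?_
    have key : (1/x - L/(2*x^2)) - (1/b - L/(2*b^2))
        = (b-x)*(2*x*b - L*x - L*b)/(2*x^2*b^2) := by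
      field_simp; ring
    have hnum : 0 ≤ (b-x)*(2*x*b - L*x - L*b) := by
      have h2 : 0 ≤ 2*x*b - L*x - L*b := by
        nlinarith [mul_nonneg hx.le (by linarith : (0:ℝ) ≤ b - L),
          mul_nonneg hb.le (by linarith : (0:ℝ) ≤ x - L)]
      exact mul_nonneg (by linarith) h2
    have : 0 ≤ (b-x)*(2*x*b - L*x - L*b)/(2*x^2*b^2) := by positivity
    linarith [key ▸ this]


/-- Key spectral inequality: for a symmetric PSD matrix `H` with eigenvalues in
`[0, G²]`, `L > 0` and `ε > L/2`,
`rᵀH(H+εI)⁻¹r − (L/2)·rᵀ(H+εI)⁻¹H(H+εI)⁻¹r ≥ c(ε)·rᵀHr`. -/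
theorem damped_step_spectral_bound {p : ℕ}
    (H : Matrix (Fin p) (Fin p) ℝ) (G L ε : ℝ)
    (hH : H.PosSemidef)
    (heig : ∀ (μ : ℝ) (v : Fin p → ℝ), v ≠ 0 → H.mulVec v = μ • v →
      μ ∈ Set.Icc 0 (G ^ 2))
    (hL : 0 < L) (hε : L / 2 < ε) (r : Fin p → ℝ) :
    min (1 / ε - L / (2 * ε ^ 2))
        (1 / (ε + G ^ 2) - L / (2 * (ε + G ^ 2) ^ 2)) * (r ⬝ᵥ H.mulVec r) ≤
      r ⬝ᵥ (H * (H + ε • 1)⁻¹).mulVec r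
        - L / 2 * (r ⬝ᵥ ((H + ε • 1)⁻¹ * H * (H + ε • 1)⁻¹).mulVec r) := by
  classical
  have hher := hH.1
  set U : Matrix (Fin p) (Fin p) ℝ := (hher.eigenvectorUnitary : Matrix (Fin p) (Fin p) ℝ) with hUdef
  set d : Fin p → ℝ := hher.eigenvalues with hddef
  have hε0 : (0:ℝ) < ε := lt_of_le_of_lt (by linarith) hε
  have hU1 : U * star U = 1 := (Matrix.mem_unitaryGroup_iff).mp hher.eigenvectorUnitary.2
  have hU2 : star U * U = 1 := (Matrix.mem_unitaryGroup_iff').mp hher.eigenvectorUnitary.2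
  have hspec : H = U * diagonal d * star U := by
    have := hher.spectral_theorem
    rwa [RCLike.ofReal_real_eq_id, Function.id_comp] at this
  have hd0 : ∀ i, 0 ≤ d i := fun i => hH.eigenvalues_nonneg i
  have hdG : ∀ i, d i ≤ G ^ 2 := by
    intro i
    have hvne : (⇑(hher.eigenvectorBasis i) : Fin p → ℝ) ≠ 0 := by
      intro h
      exact (hher.eigenvectorBasis.orthonormal.ne_zero i) (by ext j; exact congrFun h j)
    exact (heig (d i) _ hvne (hher.mulVec_eigenvectorBasis i)).2
  set a : Fin p → ℝ := fun i => d i + ε with hadef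
  have ha : ∀ i, 0 < a i := fun i => by have := hd0 i; simp [hadef]; linarith
  -- conjugation multiplication
  have conjmul : ∀ f g : Fin p → ℝ,
      (U * diagonal f * star U) * (U * diagonal g * star U)
        = U * diagonal (fun i => f i * g i) * star U := by
    intro f g
    calc (U * diagonal f * star U) * (U * diagonal g * star U)
        = U * diagonal f * ((star U * U) * (diagonal g * star U)) := by
          simp only [mul_assoc]
      _ = U * (diagonal f * diagonal g) * star U := by
          rw [hU2, one_mul]; simp only [mul_assoc]
      _ = U * diagonal (fun i => f i * g i) * star U := by
          rw [diagonal_mul_diagonal]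
  have hsum : H + ε • 1 = U * diagonal a * star U := by
    have h1 : (ε • 1 : Matrix (Fin p) (Fin p) ℝ) = U * (ε • 1) * star U := by
      rw [Matrix.mul_smul, mul_one, Matrix.smul_mul, hU1]
    have h2 : diagonal d + (ε • 1 : Matrix (Fin p) (Fin p) ℝ) = diagonal a := by
      rw [Matrix.smul_one_eq_diagonal, Matrix.diagonal_add]
    rw [hspec]
    rw [h1]
    rw [← Matrix.add_mul, ← Matrix.mul_add, h2]
  have hinv : (H + ε • 1)⁻¹ = U * diagonal (fun i => (a i)⁻¹) * star U := by
    apply Matrix.inv_eq_right_inv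
    rw [hsum, conjmul]
    have : (fun i => a i * (a i)⁻¹) = fun _ : Fin p => (1:ℝ) := by
      funext i; exact mul_inv_cancel₀ (ha i).ne'
    rw [this, Matrix.diagonal_one, mul_one, hU1]
  set s : Fin p → ℝ := star U *ᵥ r with hsdef
  have quad : ∀ f : Fin p → ℝ,
      r ⬝ᵥ (U * diagonal f * star U) *ᵥ r = ∑ i, f i * (s i)^2 := by
    intro f
    rw [← Matrix.mulVec_mulVec, ← Matrix.mulVec_mulVec, Matrix.dotProduct_mulVec]
    have hrU : r ᵥ* U = s := by
      rw [hsdef, Matrix.star_eq_conjTranspose,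
        Matrix.conjTranspose_eq_transpose_of_trivial, Matrix.mulVec_transpose]
    rw [hrU]
    simp [dotProduct, Matrix.mulVec_diagonal, hsdef]
    exact Finset.sum_congr rfl fun i _ => by ring
  have e1 : H * (H + ε • 1)⁻¹ = U * diagonal (fun i => d i * (a i)⁻¹) * star U := by
    rw [hinv, hspec, conjmul]
  have e2 : (H + ε • 1)⁻¹ * H * (H + ε • 1)⁻¹
      = U * diagonal (fun i => (a i)⁻¹ * d i * (a i)⁻¹) * star U := by
    rw [hinv, hspec, conjmul, conjmul]
  rw [e1, e2, hspec, quad, quad, quad, Finset.mul_sum, Finset.mul_sum,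
    ← Finset.sum_sub_distrib]
  apply Finset.sum_le_sum
  intro i _
  have hx : (0:ℝ) < d i + ε := by have := hd0 i; linarith
  have hg := g_interval (L := L) (a := ε) (b := ε + G^2) (x := d i + ε) hε0
    (by linarith [hd0 i]) (by linarith [hdG i])
  have heqs : (1/(d i + ε) - L/(2*(d i + ε)^2)) * d i
      = d i * (a i)⁻¹ - L/2 * ((a i)⁻¹ * d i * (a i)⁻¹) := by
    simp only [hadef]
    field_simp
  have hscalar : min (1 / ε - L / (2 * ε ^ 2))
      (1 / (ε + G ^ 2) - L / (2 * (ε + G ^ 2) ^ 2)) * d i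
      ≤ d i * (a i)⁻¹ - L/2 * ((a i)⁻¹ * d i * (a i)⁻¹) := by
    rw [← heqs]
    exact mul_le_mul_of_nonneg_right hg (hd0 i)
  calc (min (1 / ε - L / (2 * ε ^ 2))
      (1 / (ε + G ^ 2) - L / (2 * (ε + G ^ 2) ^ 2))) * (d i * s i ^ 2)
      = ((min (1 / ε - L / (2 * ε ^ 2))
        (1 / (ε + G ^ 2) - L / (2 * (ε + G ^ 2) ^ 2))) * d i) * s i ^ 2 := by ring
    _ ≤ (d i * (a i)⁻¹ - L/2 * ((a i)⁻¹ * d i * (a i)⁻¹)) * s i ^ 2 :=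
        mul_le_mul_of_nonneg_right hscalar (sq_nonneg _)
    _ = d i * (a i)⁻¹ * s i ^ 2 - L/2 * ((a i)⁻¹ * d i * (a i)⁻¹ * s i ^ 2) := by ring
end

section
/- Let V : ℝⁿ → ℝ be differentiable with L-Lipschitz gradient (L > 0), let r : ℝⁿ → ℝᵖ and a matrix-valued map J : ℝⁿ → ℝ^{p×n} satisfy V(y) = (1/2)‖r(y)‖², ∇V(y) = J(y)ᵀr(y), and ‖J(y)‖₂ ≤ G for all y. Fix ε > L/2 and define the update y⁺ := y − J(y)ᵀ(J(y)J(y)ᵀ + εI)⁻¹r(y). Then for every y, V(y) − V(y⁺) ≥ c(ε)·‖∇V(y)‖², where c(ε) := min{ 1/ε − L/(2ε²), 1/(ε+G²) − L/(2(ε+G²)²) } > 0. In particular V(y⁺) ≤ V(y). -/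
open Matrix

/-- The damped HardNet++ update direction `Jᵀ(JJᵀ + εI)⁻¹ r`. -/
noncomputable def dampedStep {p n : ℕ} (J : Matrix (Fin p) (Fin n) ℝ) (ε : ℝ)
    (r : EuclideanSpace ℝ (Fin p)) : EuclideanSpace ℝ (Fin n) :=
  Matrix.toEuclideanLin Jᵀ (Matrix.toEuclideanLin (J * Jᵀ + ε • 1)⁻¹ r)

section aux

open scoped RealInnerProductSpace

/-- `toEuclideanLin` turns matrix multiplication into composition. -/
lemma toEuclideanLin_mul_apply {a b c : ℕ} (A : Matrix (Fin a) (Fin b) ℝ)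
    (B : Matrix (Fin b) (Fin c) ℝ) (v : EuclideanSpace ℝ (Fin c)) :
    Matrix.toEuclideanLin (A * B) v
      = Matrix.toEuclideanLin A (Matrix.toEuclideanLin B v) := by
  simp [Matrix.toEuclideanLin_apply, Matrix.mulVec_mulVec]

/-- transpose acts as adjoint for real matrices. -/
lemma inner_toEuclideanLin_transpose {a b : ℕ} (A : Matrix (Fin a) (Fin b) ℝ)
    (w : EuclideanSpace ℝ (Fin a)) (u : EuclideanSpace ℝ (Fin b)) :
    ⟪Matrix.toEuclideanLin Aᵀ w, u⟫ = ⟪w, Matrix.toEuclideanLin A u⟫ := by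
  rw [← Matrix.conjTranspose_eq_transpose_of_trivial,
    Matrix.toEuclideanLin_conjTranspose_eq_adjoint, LinearMap.adjoint_inner_left]

/-- The smoothness (descent) upper bound `V(x+v) ≤ V x + ⟪∇V x, v⟫ + L/2 ‖v‖²`. -/
lemma smooth_upper_bound {n : ℕ}
    (V : EuclideanSpace ℝ (Fin n) → ℝ)
    (V' : EuclideanSpace ℝ (Fin n) → EuclideanSpace ℝ (Fin n))
    (L : ℝ) (hL0 : 0 ≤ L)
    (hgrad : ∀ y, HasGradientAt V (V' y) y)
    (hlip : ∀ y₁ y₂, ‖V' y₁ - V' y₂‖ ≤ L * ‖y₁ - y₂‖)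
    (x v : EuclideanSpace ℝ (Fin n)) :
    V (x + v) ≤ V x + ⟪V' x, v⟫ + L / 2 * ‖v‖ ^ 2 := by
  have hV'lip : LipschitzWith L.toNNReal V' := by
    apply LipschitzWith.of_dist_le_mul
    intro a b
    rw [dist_eq_norm, dist_eq_norm, Real.coe_toNNReal _ hL0]
    exact hlip a b
  set ψ : ℝ → ℝ := fun t => ⟪V' (x + t • v), v⟫ with hψ
  have hψcont : Continuous ψ := by
    apply Continuous.inner _ continuous_const
    exact hV'lip.continuous.comp (by continuity)
  have hderiv : ∀ t : ℝ, HasDerivAt (fun t : ℝ => V (x + t • v)) (ψ t) t := by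
    intro t
    have hline : HasDerivAt (fun t : ℝ => x + t • v) v t := by
      simpa using ((hasDerivAt_id t).smul_const v).const_add x
    have := ((hgrad (x + t • v)).hasFDerivAt).comp_hasDerivAt t hline
    simpa [hψ, InnerProductSpace.toDual_apply_apply, Function.comp_def] using this
  have hFTC : ∫ t in (0:ℝ)..1, ψ t = V (x + v) - V x := by
    have := intervalIntegral.integral_eq_sub_of_hasDerivAt
      (f := fun t : ℝ => V (x + t • v)) (f' := ψ)
      (fun t _ => hderiv t) (hψcont.intervalIntegrable 0 1)
    simpa using this
  have hbound : ∫ t in (0:ℝ)..1, ψ t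
      ≤ ∫ t in (0:ℝ)..1, (⟪V' x, v⟫ + L * ‖v‖ ^ 2 * t) := by
    have hint2 : IntervalIntegrable (fun t : ℝ => ⟪V' x, v⟫ + L * ‖v‖ ^ 2 * t)
        MeasureTheory.volume 0 1 := (by continuity : Continuous _).intervalIntegrable 0 1
    apply intervalIntegral.integral_mono_on (by norm_num)
      (hψcont.intervalIntegrable 0 1) hint2
    intro t ht
    have hsub : ψ t - ⟪V' x, v⟫ = ⟪V' (x + t • v) - V' x, v⟫ := by
      simp [hψ, inner_sub_left]
    have hcs : ⟪V' (x + t • v) - V' x, v⟫ ≤ ‖V' (x + t • v) - V' x‖ * ‖v‖ :=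
      real_inner_le_norm _ _
    have hlipb : ‖V' (x + t • v) - V' x‖ ≤ L * (t * ‖v‖) := by
      have := hlip (x + t • v) x
      simpa [norm_smul, abs_of_nonneg ht.1] using this
    have hnn : ‖V' (x + t • v) - V' x‖ * ‖v‖ ≤ L * (t * ‖v‖) * ‖v‖ :=
      mul_le_mul_of_nonneg_right hlipb (norm_nonneg v)
    nlinarith [hsub, hcs]
  have hint : ∫ t in (0:ℝ)..1, (⟪V' x, v⟫ + L * ‖v‖ ^ 2 * t)
      = ⟪V' x, v⟫ + L / 2 * ‖v‖ ^ 2 := by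
    have h2 : IntervalIntegrable (fun t : ℝ => L * ‖v‖ ^ 2 * t)
        MeasureTheory.volume 0 1 := (by continuity : Continuous _).intervalIntegrable 0 1
    rw [intervalIntegral.integral_add intervalIntegrable_const h2,
      intervalIntegral.integral_const_mul, integral_id]
    simp
    ring
  rw [hFTC] at hbound
  rw [hint] at hbound
  linarith

/-- The scalar core of the descent estimate. -/
lemma scalar_key (L ε Γ m₁ m₂ m₃ : ℝ) (hL : 0 < L) (hε : L / 2 < ε) (hΓ : 0 ≤ Γ)
    (h1 : 0 ≤ m₁) (h2 : 0 ≤ m₂) (h3 : 0 ≤ m₃)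
    (h21 : m₂ ≤ Γ * m₁) (h32 : m₃ ≤ Γ * m₂) :
    min (1 / ε - L / (2 * ε ^ 2)) (1 / (ε + Γ) - L / (2 * (ε + Γ) ^ 2))
      * (m₃ + 2 * ε * m₂ + ε ^ 2 * m₁) ≤ m₂ + (ε - L / 2) * m₁ := by
  have hε0 : 0 < ε := lt_of_le_of_lt (by positivity) hε
  have hβ0 : 0 < ε + Γ := by linarith
  set c := min (1 / ε - L / (2 * ε ^ 2)) (1 / (ε + Γ) - L / (2 * (ε + Γ) ^ 2)) with hc
  have hc1 : c ≤ 1 / ε - L / (2 * ε ^ 2) := min_le_left _ _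
  have hc2 : c ≤ 1 / (ε + Γ) - L / (2 * (ε + Γ) ^ 2) := min_le_right _ _
  have hcpos : 0 < c := by
    apply lt_min
    · rw [sub_pos, div_lt_div_iff₀ (by positivity) (by positivity)]
      nlinarith
    · rw [sub_pos, div_lt_div_iff₀ (by positivity) (by positivity)]
      nlinarith
  have hg0 : 0 ≤ ε - L / 2 - c * ε ^ 2 := by
    have : c * ε ^ 2 ≤ (1 / ε - L / (2 * ε ^ 2)) * ε ^ 2 :=
      mul_le_mul_of_nonneg_right hc1 (by positivity)
    have heq : (1 / ε - L / (2 * ε ^ 2)) * ε ^ 2 = ε - L / 2 := by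
      field_simp
    linarith [heq ▸ this]
  have hgΓ : 0 ≤ (ε + Γ) - L / 2 - c * (ε + Γ) ^ 2 := by
    have : c * (ε + Γ) ^ 2 ≤ (1 / (ε + Γ) - L / (2 * (ε + Γ) ^ 2)) * (ε + Γ) ^ 2 :=
      mul_le_mul_of_nonneg_right hc2 (by positivity)
    have heq : (1 / (ε + Γ) - L / (2 * (ε + Γ) ^ 2)) * (ε + Γ) ^ 2 = (ε + Γ) - L / 2 := by
      field_simp
    linarith [heq ▸ this]
  rcases eq_or_lt_of_le hΓ with hΓ0 | hΓpos
  · have hm2 : m₂ = 0 := le_antisymm (by nlinarith) h2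
    have hm3 : m₃ = 0 := le_antisymm (by nlinarith) h3
    rw [hm2, hm3]
    nlinarith
  · have key : Γ * ((m₂ + (ε - L / 2) * m₁) - c * (m₃ + 2 * ε * m₂ + ε ^ 2 * m₁))
        = (ε - L / 2 - c * ε ^ 2) * (Γ * m₁ - m₂)
          + ((ε + Γ) - L / 2 - c * (ε + Γ) ^ 2) * m₂
          + c * Γ * (Γ * m₂ - m₃) := by ring
    have hrhs : 0 ≤ (ε - L / 2 - c * ε ^ 2) * (Γ * m₁ - m₂)
          + ((ε + Γ) - L / 2 - c * (ε + Γ) ^ 2) * m₂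
          + c * Γ * (Γ * m₂ - m₃) := by
      have t1 := mul_nonneg hg0 (by linarith : (0:ℝ) ≤ Γ * m₁ - m₂)
      have t2 := mul_nonneg hgΓ h2
      have t3 := mul_nonneg (mul_nonneg hcpos.le hΓ) (by linarith : (0:ℝ) ≤ Γ * m₂ - m₃)
      linarith
    have := (mul_nonneg_iff_of_pos_left hΓpos).mp (key ▸ hrhs)
    linarith

end aux

set_option maxHeartbeats 1000000 in
/-- One-step descent: under `L`-smoothness, the gradient identity
`∇V(y) = J(y)ᵀ r(y)`, operator-norm bound `‖J(y)‖₂ ≤ G`, and `ε > L/2`, the damped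
update `y⁺ = y − Jᵀ(JJᵀ + εI)⁻¹ r(y)` satisfies
`V(y) − V(y⁺) ≥ c(ε)·‖∇V(y)‖²`; in particular `V(y⁺) ≤ V(y)`. -/
theorem damped_step_descent {n p : ℕ}
    (V : EuclideanSpace ℝ (Fin n) → ℝ)
    (V' : EuclideanSpace ℝ (Fin n) → EuclideanSpace ℝ (Fin n))
    (r : EuclideanSpace ℝ (Fin n) → EuclideanSpace ℝ (Fin p))
    (J : EuclideanSpace ℝ (Fin n) → Matrix (Fin p) (Fin n) ℝ)
    (L G ε : ℝ) (hL : 0 < L)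
    (hgrad : ∀ y, HasGradientAt V (V' y) y)
    (hlip : ∀ y₁ y₂, ‖V' y₁ - V' y₂‖ ≤ L * ‖y₁ - y₂‖)
    (hVr : ∀ y, V y = (1 / 2) * ‖r y‖ ^ 2)
    (hgradJ : ∀ y, V' y = Matrix.toEuclideanLin (J y)ᵀ (r y))
    (hJG : ∀ y v, ‖Matrix.toEuclideanLin (J y) v‖ ≤ G * ‖v‖)
    (hε : L / 2 < ε) :
    0 < min (1 / ε - L / (2 * ε ^ 2))
        (1 / (ε + G ^ 2) - L / (2 * (ε + G ^ 2) ^ 2)) ∧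
    ∀ y, min (1 / ε - L / (2 * ε ^ 2))
          (1 / (ε + G ^ 2) - L / (2 * (ε + G ^ 2) ^ 2)) * ‖V' y‖ ^ 2 ≤
        V y - V (y - dampedStep (J y) ε (r y)) ∧
      V (y - dampedStep (J y) ε (r y)) ≤ V y := by
  open scoped RealInnerProductSpace in
  have hε0 : 0 < ε := lt_of_le_of_lt (by positivity) hε
  have hβ0 : 0 < ε + G ^ 2 := by positivity
  set c := min (1 / ε - L / (2 * ε ^ 2))
    (1 / (ε + G ^ 2) - L / (2 * (ε + G ^ 2) ^ 2)) with hcdef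
  have hcpos : 0 < c := by
    apply lt_min
    · rw [sub_pos, div_lt_div_iff₀ (by positivity) (by positivity)]
      nlinarith
    · rw [sub_pos, div_lt_div_iff₀ (by positivity) (by positivity)]
      nlinarith
  refine ⟨hcpos, fun y => ?_⟩
  -- Set up the algebra
  set Jm := J y with hJm
  set R := r y with hR
  set M : Matrix (Fin p) (Fin p) ℝ := Jm * Jmᵀ + ε • 1 with hM
  -- M is positive definite, hence invertible
  have hA : (Jm * Jmᵀ).PosSemidef := by
    have := Matrix.posSemidef_self_mul_conjTranspose Jm
    rwa [Matrix.conjTranspose_eq_transpose_of_trivial] at this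
  have hI : ((ε • 1 : Matrix (Fin p) (Fin p) ℝ)).PosDef := by
    rw [Matrix.smul_one_eq_diagonal]
    exact Matrix.PosDef.diagonal (fun _ => hε0)
  have hMpd : M.PosDef := Matrix.PosDef.posSemidef_add hA hI
  have hMM : M * M⁻¹ = 1 :=
    Matrix.mul_nonsing_inv _ ((Matrix.isUnit_iff_isUnit_det _).mp hMpd.isUnit)
  set s : EuclideanSpace ℝ (Fin p) := Matrix.toEuclideanLin M⁻¹ R with hs
  set u : EuclideanSpace ℝ (Fin n) := Matrix.toEuclideanLin Jmᵀ s with hu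
  set w : EuclideanSpace ℝ (Fin p) := Matrix.toEuclideanLin Jm u with hw
  set z : EuclideanSpace ℝ (Fin n) := Matrix.toEuclideanLin Jmᵀ w with hz
  have hstep : dampedStep Jm ε R = u := rfl
  -- R = w + ε • s
  have hRws : R = w + ε • s := by
    have h1 : Matrix.toEuclideanLin M s = R := by
      rw [hs, ← toEuclideanLin_mul_apply, hMM]
      simp [Matrix.toEuclideanLin_apply]
    have h2 : Matrix.toEuclideanLin M s = w + ε • s := by
      rw [hM, map_add, LinearMap.add_apply, _root_.map_smul, LinearMap.smul_apply,
        toEuclideanLin_mul_apply]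
      congr 1
      simp [Matrix.toEuclideanLin_apply]
    rw [← h1, h2]
  -- V' y = z + ε • u
  have hV'y : V' y = z + ε • u := by
    rw [hgradJ y, ← hR, ← hJm, hRws, map_add, _root_.map_smul, hz, hu]
  -- inner products
  have hzu : ⟪z, u⟫ = ‖w‖ ^ 2 := by
    rw [hz, inner_toEuclideanLin_transpose, ← hw, real_inner_self_eq_norm_sq]
  have hnormV' : ‖V' y‖ ^ 2 = ‖z‖ ^ 2 + 2 * ε * ‖w‖ ^ 2 + ε ^ 2 * ‖u‖ ^ 2 := by
    rw [hV'y, norm_add_sq_real, real_inner_smul_right, hzu, norm_smul]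
    rw [Real.norm_eq_abs, abs_of_pos hε0, mul_pow]
    ring
  have hinnerV'u : ⟪V' y, u⟫ = ‖w‖ ^ 2 + ε * ‖u‖ ^ 2 := by
    rw [hV'y, inner_add_left, real_inner_smul_left, hzu, real_inner_self_eq_norm_sq]
  -- norm bounds
  have hm2 : ‖w‖ ^ 2 ≤ G ^ 2 * ‖u‖ ^ 2 := by
    have h := hJG y u
    rw [← hJm, ← hw] at h
    nlinarith [norm_nonneg w]
  have hm3 : ‖z‖ ^ 2 ≤ G ^ 2 * ‖w‖ ^ 2 := by
    have h1 : ‖z‖ ^ 2 = ⟪w, Matrix.toEuclideanLin Jm z⟫ := by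
      rw [← real_inner_self_eq_norm_sq]
      conv_lhs => rw [hz]
      rw [inner_toEuclideanLin_transpose]
    have h2 : ⟪w, Matrix.toEuclideanLin Jm z⟫ ≤ ‖w‖ * ‖Matrix.toEuclideanLin Jm z‖ :=
      real_inner_le_norm _ _
    have h3 : ‖Matrix.toEuclideanLin Jm z‖ ≤ G * ‖z‖ := by
      have := hJG y z; rwa [← hJm] at this
    have h4 : ‖z‖ ^ 2 ≤ ‖w‖ * (G * ‖z‖) := by
      calc ‖z‖ ^ 2 = ⟪w, Matrix.toEuclideanLin Jm z⟫ := h1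
        _ ≤ ‖w‖ * ‖Matrix.toEuclideanLin Jm z‖ := h2
        _ ≤ ‖w‖ * (G * ‖z‖) := by
            apply mul_le_mul_of_nonneg_left h3 (norm_nonneg w)
    nlinarith [sq_nonneg (G * ‖w‖ - ‖z‖), norm_nonneg z, norm_nonneg w]
  -- descent lemma
  have hdesc : V (y - dampedStep Jm ε R) ≤ V y - ⟪V' y, u⟫ + L / 2 * ‖u‖ ^ 2 := by
    have h5 := smooth_upper_bound V V' L hL.le hgrad hlip y (-u)
    rw [inner_neg_right, norm_neg] at h5
    rw [hstep, sub_eq_add_neg]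
    linarith
  -- scalar inequality
  have hscalar := scalar_key L ε (G ^ 2) (‖u‖ ^ 2) (‖w‖ ^ 2) (‖z‖ ^ 2) hL hε
    (by positivity) (by positivity) (by positivity) (by positivity) hm2 hm3
  have hchain : c * ‖V' y‖ ^ 2 ≤ V y - V (y - dampedStep Jm ε R) := by
    rw [hnormV']
    calc c * (‖z‖ ^ 2 + 2 * ε * ‖w‖ ^ 2 + ε ^ 2 * ‖u‖ ^ 2)
        ≤ ‖w‖ ^ 2 + (ε - L / 2) * ‖u‖ ^ 2 := hscalar
      _ ≤ V y - V (y - dampedStep Jm ε R) := by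
          have : ⟪V' y, u⟫ - L / 2 * ‖u‖ ^ 2 = ‖w‖ ^ 2 + (ε - L / 2) * ‖u‖ ^ 2 := by
            rw [hinnerV'u]; ring
          linarith
  refine ⟨hchain, ?_⟩
  have h0 : 0 ≤ c * ‖V' y‖ ^ 2 := by positivity
  linarith
end

section
/- Under the hypotheses of the one-step contraction (V : ℝⁿ → ℝ is L-smooth with L > 0 and μ-PL with minimizer y*; V(y) = (1/2)‖r(y)‖², ∇V(y) = J(y)ᵀr(y), ‖J(y)‖₂ ≤ G; ε > L/2), let (y_k)_{k≥0} be the sequence generated by y_{k+1} = y_k − J(y_k)ᵀ(J(y_k)J(y_k)ᵀ + εI)⁻¹r(y_k) from any initial point y₀. Then for all k ≥ 0, V(y_k) − V(y*) ≤ (1 − 2μ·c(ε))ᵏ·(V(y₀) − V(y*)), where c(ε) := min{ 1/ε − L/(2ε²), 1/(ε+G²) − L/(2(ε+G²)²) }. -/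
open Matrix

lemma descent_aux {E : Type*} [NormedAddCommGroup E] [InnerProductSpace ℝ E] [CompleteSpace E]
    (V : E → ℝ) (V' : E → E) (L : ℝ) (hL : 0 < L)
    (hgrad : ∀ y, HasGradientAt V (V' y) y)
    (hlip : ∀ y₁ y₂ : E, ‖V' y₁ - V' y₂‖ ≤ L * ‖y₁ - y₂‖)
    (x u : E) : V (x + u) ≤ V x + inner ℝ (V' x) u + L / 2 * ‖u‖ ^ 2 := by
  set φ : ℝ → ℝ := fun t => V (x + t • u) - t * inner ℝ (V' x) u - L / 2 * t ^ 2 * ‖u‖ ^ 2 with hφ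
  have hline : ∀ t : ℝ, HasDerivAt (fun s : ℝ => x + s • u) u t := by
    intro t
    simpa using ((hasDerivAt_id t).smul_const u).const_add x
  have hd : ∀ t : ℝ, HasDerivAt φ
      ((inner ℝ (V' (x + t • u)) u : ℝ) - inner ℝ (V' x) u - L * t * ‖u‖ ^ 2) t := by
    intro t
    have h1 : HasDerivAt (fun s : ℝ => V (x + s • u)) (inner ℝ (V' (x + t • u)) u : ℝ) t := by
      have := ((hgrad (x + t • u)).hasFDerivAt.comp_hasDerivAt t (hline t))
      simp [InnerProductSpace.toDual_apply_apply] at this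
      exact this
    have h2 : HasDerivAt (fun s : ℝ => s * (inner ℝ (V' x) u : ℝ)) (inner ℝ (V' x) u : ℝ) t := by
      simpa using (hasDerivAt_id t).mul_const (inner ℝ (V' x) u : ℝ)
    have h3 : HasDerivAt (fun s : ℝ => L / 2 * s ^ 2 * ‖u‖ ^ 2) (L * t * ‖u‖ ^ 2) t := by
      have := ((hasDerivAt_pow 2 t).const_mul (L / 2)).mul_const (‖u‖ ^ 2)
      refine this.congr_deriv ?_
      rw [show (2:ℕ) - 1 = 1 from rfl]
      push_cast
      ring
    have h4 := (h1.sub h2).sub h3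
    exact h4
  have hanti : AntitoneOn φ (Set.Icc 0 1) := by
    apply antitoneOn_of_deriv_nonpos (convex_Icc 0 1)
    · exact fun t _ => ((hd t).continuousAt).continuousWithinAt
    · intro t ht
      exact ((hd t).differentiableAt).differentiableWithinAt
    · intro t ht
      rw [interior_Icc] at ht
      rw [(hd t).deriv]
      have key : (inner ℝ (V' (x + t • u)) u : ℝ) - inner ℝ (V' x) u ≤ L * t * ‖u‖ ^ 2 := by
        rw [← inner_sub_left]
        calc (inner ℝ (V' (x + t • u) - V' x) u : ℝ) ≤ ‖V' (x + t • u) - V' x‖ * ‖u‖ :=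
              real_inner_le_norm _ _
          _ ≤ (L * ‖(x + t • u) - x‖) * ‖u‖ := by
              apply mul_le_mul_of_nonneg_right (hlip _ _) (norm_nonneg _)
          _ = L * t * ‖u‖ ^ 2 := by
              simp [norm_smul, abs_of_pos ht.1]
              ring
      linarith
  have := hanti (by simp : (0:ℝ) ∈ Set.Icc (0:ℝ) 1) (by simp : (1:ℝ) ∈ Set.Icc (0:ℝ) 1) zero_le_one
  simp [hφ] at this
  linarith

lemma scalar_core (L ε Gsq a1 a2 a3 c : ℝ) (hL : 0 < L) (hε : L / 2 < ε) (hG : 0 ≤ Gsq)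
    (h1 : 0 ≤ a1) (h2 : 0 ≤ a2) (h3 : 0 ≤ a3) (h21 : a2 ≤ Gsq * a1) (h32 : a3 ≤ Gsq * a2)
    (hc : c = min (1 / ε - L / (2 * ε ^ 2)) (1 / (ε + Gsq) - L / (2 * (ε + Gsq) ^ 2))) :
    c * (a3 + 2 * ε * a2 + ε ^ 2 * a1) ≤ a2 + ε * a1 - L / 2 * a1 := by
  have hεpos : 0 < ε := lt_trans (by linarith) hε
  have hbpos : 0 < ε + Gsq := by linarith
  have hfε : (1 / ε - L / (2 * ε ^ 2)) * ε ^ 2 = ε - L / 2 := by field_simp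
  have hfb : (1 / (ε + Gsq) - L / (2 * (ε + Gsq) ^ 2)) * (ε + Gsq) ^ 2 = (ε + Gsq) - L / 2 := by
    field_simp
  have hc1 : c ≤ 1 / ε - L / (2 * ε ^ 2) := hc ▸ min_le_left _ _
  have hc2 : c ≤ 1 / (ε + Gsq) - L / (2 * (ε + Gsq) ^ 2) := hc ▸ min_le_right _ _
  have hc0 : 0 < c := by
    rw [hc]
    apply lt_min
    · rw [lt_sub_iff_add_lt, zero_add, div_lt_div_iff₀ (by positivity) hεpos]
      nlinarith
    · rw [lt_sub_iff_add_lt, zero_add, div_lt_div_iff₀ (by positivity) hbpos]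
      nlinarith
  have hq1 : c * ε ^ 2 ≤ ε - L / 2 := by
    calc c * ε ^ 2 ≤ (1 / ε - L / (2 * ε ^ 2)) * ε ^ 2 :=
          mul_le_mul_of_nonneg_right hc1 (sq_nonneg ε)
      _ = ε - L / 2 := hfε
  have hq2 : c * (ε + Gsq) ^ 2 ≤ (ε + Gsq) - L / 2 := by
    calc c * (ε + Gsq) ^ 2 ≤ (1 / (ε + Gsq) - L / (2 * (ε + Gsq) ^ 2)) * (ε + Gsq) ^ 2 :=
          mul_le_mul_of_nonneg_right hc2 (sq_nonneg _)
      _ = (ε + Gsq) - L / 2 := hfb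
  rcases eq_or_lt_of_le hG with hG0 | hGpos
  · have ha2 : a2 = 0 := le_antisymm (by rw [← hG0] at h21; linarith) h2
    have ha3 : a3 = 0 := le_antisymm (by rw [← hG0] at h32; linarith [ha2]) h3
    rw [ha2, ha3]
    nlinarith [mul_le_mul_of_nonneg_right hq1 h1]
  · -- Gsq > 0 case: multiply through by Gsq
    have key : 0 ≤ Gsq * ((a2 + ε * a1 - L / 2 * a1) - c * (a3 + 2 * ε * a2 + ε ^ 2 * a1)) := by
      have p1 : 0 ≤ (ε - L / 2 - c * ε ^ 2) * (Gsq * a1 - a2) :=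
        mul_nonneg (by linarith) (by linarith)
      have p2 : 0 ≤ ((ε + Gsq) - L / 2 - c * (ε + Gsq) ^ 2) * a2 :=
        mul_nonneg (by linarith) h2
      have p3 : 0 ≤ c * Gsq * (Gsq * a2 - a3) :=
        mul_nonneg (mul_nonneg hc0.le hG) (by linarith)
      nlinarith [p1, p2, p3]
    nlinarith [key]

lemma mulE {a b c : ℕ} (M : Matrix (Fin a) (Fin b) ℝ) (N : Matrix (Fin b) (Fin c) ℝ)
    (v : EuclideanSpace ℝ (Fin c)) :
    toEuclideanLin (M * N) v = toEuclideanLin M (toEuclideanLin N v) := by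
  simp [Matrix.toEuclideanLin_apply, Matrix.mulVec_mulVec]

lemma adjE {a b : ℕ} (M : Matrix (Fin a) (Fin b) ℝ) (v : EuclideanSpace ℝ (Fin a))
    (u : EuclideanSpace ℝ (Fin b)) :
    (inner ℝ (toEuclideanLin Mᵀ v) u : ℝ) = inner ℝ v (toEuclideanLin M u) := by
  have h : (Mᵀ : Matrix (Fin b) (Fin a) ℝ) = Mᴴ :=
    (Matrix.conjTranspose_eq_transpose_of_trivial M).symm
  rw [h, Matrix.toEuclideanLin_conjTranspose_eq_adjoint, LinearMap.adjoint_inner_left]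

lemma oneE {a : ℕ} (v : EuclideanSpace ℝ (Fin a)) :
    toEuclideanLin (1 : Matrix (Fin a) (Fin a) ℝ) v = v := by
  simp [Matrix.toEuclideanLin_apply]

lemma transpose_bound {p n : ℕ} (Jm : Matrix (Fin p) (Fin n) ℝ) (G : ℝ)
    (hJG : ∀ v, ‖toEuclideanLin Jm v‖ ≤ G * ‖v‖) (v : EuclideanSpace ℝ (Fin p)) :
    ‖toEuclideanLin Jmᵀ v‖ ^ 2 ≤ G ^ 2 * ‖v‖ ^ 2 := by
  set w := toEuclideanLin Jmᵀ v with hw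
  have key : ‖w‖ ^ 2 ≤ G * ‖v‖ * ‖w‖ := by
    have h1 : ‖w‖ ^ 2 = inner ℝ v (toEuclideanLin Jm w) := by
      rw [← adjE, ← hw, real_inner_self_eq_norm_sq]
    calc ‖w‖ ^ 2 = inner ℝ v (toEuclideanLin Jm w) := h1
      _ ≤ ‖v‖ * ‖toEuclideanLin Jm w‖ := real_inner_le_norm _ _
      _ ≤ ‖v‖ * (G * ‖w‖) := mul_le_mul_of_nonneg_left (hJG w) (norm_nonneg v)
      _ = G * ‖v‖ * ‖w‖ := by ring
  rcases eq_or_lt_of_le (norm_nonneg w) with h0 | h0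
  · rw [← h0]
    nlinarith [sq_nonneg (G * ‖v‖), sq_nonneg G, sq_nonneg ‖v‖, sq_nonneg (G - ‖v‖), sq_nonneg (G + ‖v‖)]
  · have hle : ‖w‖ ≤ G * ‖v‖ := by nlinarith [key, h0]
    nlinarith [hle, h0, norm_nonneg w]

lemma one_step_core {n p : ℕ} (Jm : Matrix (Fin p) (Fin n) ℝ) (r0 : EuclideanSpace ℝ (Fin p))
    (G ε L : ℝ) (hL : 0 < L) (hε : L / 2 < ε)
    (hJG : ∀ v, ‖toEuclideanLin Jm v‖ ≤ G * ‖v‖) :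
    min (1 / ε - L / (2 * ε ^ 2)) (1 / (ε + G ^ 2) - L / (2 * (ε + G ^ 2) ^ 2)) *
        ‖toEuclideanLin Jmᵀ r0‖ ^ 2 ≤
      (inner ℝ (toEuclideanLin Jmᵀ r0) (dampedStep Jm ε r0) : ℝ)
        - L / 2 * ‖dampedStep Jm ε r0‖ ^ 2 := by
  have hεpos : 0 < ε := lt_trans (by linarith) hε
  set c := min (1 / ε - L / (2 * ε ^ 2)) (1 / (ε + G ^ 2) - L / (2 * (ε + G ^ 2) ^ 2)) with hc
  set A : Matrix (Fin p) (Fin p) ℝ := Jm * Jmᵀ with hA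
  set T : Matrix (Fin p) (Fin p) ℝ := A + ε • 1 with hT
  have hApsd : A.PosSemidef := by
    have := Matrix.posSemidef_self_mul_conjTranspose Jm
    rwa [Matrix.conjTranspose_eq_transpose_of_trivial] at this
  have hTpd : T.PosDef := by
    apply Matrix.PosDef.posSemidef_add hApsd
    rw [Matrix.smul_one_eq_diagonal]
    exact Matrix.PosDef.diagonal fun _ => hεpos
  have hTinv : T * T⁻¹ = 1 := Matrix.mul_nonsing_inv T hTpd.det_pos.ne'.isUnit
  set s : EuclideanSpace ℝ (Fin p) := toEuclideanLin T⁻¹ r0 with hs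
  have hr0 : r0 = toEuclideanLin T s := by
    rw [hs, ← mulE, hTinv, oneE]
  set w : EuclideanSpace ℝ (Fin n) := toEuclideanLin Jmᵀ s with hw
  have hd : dampedStep Jm ε r0 = w := rfl
  set as : EuclideanSpace ℝ (Fin p) := toEuclideanLin A s with has
  have hasw : as = toEuclideanLin Jm w := by rw [has, hA, mulE, hw]
  set a1 : ℝ := inner ℝ s as with ha1
  set a2 : ℝ := ‖as‖ ^ 2 with ha2
  set a3 : ℝ := inner ℝ as (toEuclideanLin A as) with ha3
  -- a1 = ‖w‖²
  have ha1w : a1 = ‖w‖ ^ 2 := by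
    rw [ha1, hasw, ← adjE, ← hw, real_inner_self_eq_norm_sq]
  -- a3 = ‖Jᵀ as‖²
  have ha3w : a3 = ‖toEuclideanLin Jmᵀ as‖ ^ 2 := by
    rw [ha3, hA, mulE, ← adjE, real_inner_self_eq_norm_sq]
  have h1 : 0 ≤ a1 := ha1w ▸ sq_nonneg _
  have h2 : 0 ≤ a2 := sq_nonneg _
  have h3 : 0 ≤ a3 := ha3w ▸ sq_nonneg _
  have h21 : a2 ≤ G ^ 2 * a1 := by
    rw [ha2, ha1w, hasw]
    have h := hJG w
    have hGw : 0 ≤ G * ‖w‖ := le_trans (norm_nonneg _) h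
    nlinarith [norm_nonneg (toEuclideanLin Jm w)]
  have h32 : a3 ≤ G ^ 2 * a2 := by
    rw [ha3w, ha2]
    exact transpose_bound Jm G hJG as
  -- r0 = as + ε • s
  have hr0' : r0 = as + ε • s := by
    rw [hr0, hT, map_add, _root_.map_smul]
    simp only [LinearMap.add_apply, LinearMap.smul_apply, oneE, has]
  -- inner g d = a2 + ε * a1
  have hgd : (inner ℝ (toEuclideanLin Jmᵀ r0) w : ℝ) = a2 + ε * a1 := by
    rw [adjE, ← hasw, hr0', inner_add_left, real_inner_smul_left, ha2,
      real_inner_self_eq_norm_sq, ha1, real_inner_comm]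
  -- ‖g‖² = a3 + 2ε a2 + ε² a1
  have hg2 : ‖toEuclideanLin Jmᵀ r0‖ ^ 2 = a3 + 2 * ε * a2 + ε ^ 2 * a1 := by
    have hgexp : toEuclideanLin Jmᵀ r0 = toEuclideanLin Jmᵀ as + ε • w := by
      rw [hr0', map_add, (toEuclideanLin Jmᵀ).map_smul, hw]
    rw [hgexp, norm_add_sq_real, real_inner_smul_right, norm_smul, ha3w, ha1w]
    have hin : (inner ℝ (toEuclideanLin Jmᵀ as) w : ℝ) = a2 := by
      rw [hw, adjE, ← hasw, real_inner_self_eq_norm_sq, ha2]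
    rw [hin]
    simp [abs_of_pos hεpos]
    ring
  rw [hd, hgd, hg2, ha1w.symm]
  exact scalar_core L ε (G ^ 2) a1 a2 a3 c hL hε (sq_nonneg G) h1 h2 h3 h21 h32 hc


/-- Iterated contraction: under the one-step hypotheses, the iterates of the damped
projection satisfy `V(y_k) − V(y*) ≤ (1 − 2μ·c(ε))ᵏ (V(y₀) − V(y*))`. -/
theorem damped_iteration_linear_convergence {n p : ℕ}
    (V : EuclideanSpace ℝ (Fin n) → ℝ)
    (V' : EuclideanSpace ℝ (Fin n) → EuclideanSpace ℝ (Fin n))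
    (r : EuclideanSpace ℝ (Fin n) → EuclideanSpace ℝ (Fin p))
    (J : EuclideanSpace ℝ (Fin n) → Matrix (Fin p) (Fin n) ℝ)
    (L μ G ε : ℝ) (hL : 0 < L) (hμ : 0 < μ)
    (hgrad : ∀ y, HasGradientAt V (V' y) y)
    (hlip : ∀ y₁ y₂, ‖V' y₁ - V' y₂‖ ≤ L * ‖y₁ - y₂‖)
    (ystar : EuclideanSpace ℝ (Fin n))
    (hmin : ∀ y, V ystar ≤ V y)
    (hPL : ∀ y, μ * (V y - V ystar) ≤ (1 / 2) * ‖V' y‖ ^ 2)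
    (hVr : ∀ y, V y = (1 / 2) * ‖r y‖ ^ 2)
    (hgradJ : ∀ y, V' y = Matrix.toEuclideanLin (J y)ᵀ (r y))
    (hJG : ∀ y v, ‖Matrix.toEuclideanLin (J y) v‖ ≤ G * ‖v‖)
    (hε : L / 2 < ε)
    (y : ℕ → EuclideanSpace ℝ (Fin n))
    (hiter : ∀ k, y (k + 1) = y k - dampedStep (J (y k)) ε (r (y k))) :
    ∀ k, V (y k) - V ystar ≤
      (1 - 2 * μ * min (1 / ε - L / (2 * ε ^ 2))
          (1 / (ε + G ^ 2) - L / (2 * (ε + G ^ 2) ^ 2))) ^ k *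
        (V (y 0) - V ystar) := by
  have hεpos : 0 < ε := lt_trans (by linarith) hε
  have hbpos : 0 < ε + G ^ 2 := by nlinarith [sq_nonneg G]
  set c := min (1 / ε - L / (2 * ε ^ 2)) (1 / (ε + G ^ 2) - L / (2 * (ε + G ^ 2) ^ 2)) with hc
  have hc0 : 0 < c := by
    rw [hc]
    apply lt_min
    · rw [lt_sub_iff_add_lt, zero_add, div_lt_div_iff₀ (by positivity) hεpos]
      nlinarith
    · rw [lt_sub_iff_add_lt, zero_add, div_lt_div_iff₀ (by positivity) hbpos]
      nlinarith
  clear_value c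
  -- one-step contraction
  have step : ∀ k, V (y (k + 1)) - V ystar ≤ (1 - 2 * μ * c) * (V (y k) - V ystar) := by
    intro k
    set x := y k with hx
    set d := dampedStep (J x) ε (r x) with hdd
    have hdesc := descent_aux V V' L hL hgrad hlip x (-d)
    have hcore := one_step_core (J x) (r x) G ε L hL hε (hJG x)
    rw [← hgradJ x] at hcore
    rw [← hc] at hcore
    have hPLx := hPL x
    have hinner : (inner ℝ (V' x) (-d) : ℝ) = -(inner ℝ (V' x) d : ℝ) := inner_neg_right _ _
    have hnorm : ‖(-d : EuclideanSpace ℝ (Fin n))‖ = ‖d‖ := norm_neg d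
    have hVstep : V (x - d) ≤ V x - c * ‖V' x‖ ^ 2 := by
      have : x + (-d) = x - d := by abel
      rw [this, hinner, hnorm] at hdesc
      linarith
    have hmono : c * (2 * μ * (V x - V ystar)) ≤ c * ‖V' x‖ ^ 2 := by
      apply mul_le_mul_of_nonneg_left _ hc0.le
      linarith
    have hiter' : y (k + 1) = x - d := hiter k
    rw [hiter']
    nlinarith [hVstep, hmono]
  -- main induction
  by_cases h0 : V (y 0) = V ystar
  · have hall : ∀ k, V (y k) = V ystar := by
      intro k
      induction k with
      | zero => exact h0
      | succ k ih =>
        have := step k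
        rw [ih] at this
        simp at this
        exact le_antisymm (by linarith) (hmin _)
    intro k
    rw [hall k, h0]
    simp
  · intro k
    have hpos : 0 < V (y 0) - V ystar := lt_of_le_of_ne (by linarith [hmin (y 0)]) (by
      intro h; exact h0 (by linarith))
    -- μ ≤ L
    have hμL : μ ≤ L := by
      set g0 := V' (y 0) with hg0
      have hd := descent_aux V V' L hL hgrad hlip (y 0) ((-(1 / L)) • g0)
      have h1 : (inner ℝ g0 ((-(1 / L)) • g0) : ℝ) = -(1 / L) * ‖g0‖ ^ 2 := by
        rw [real_inner_smul_right, real_inner_self_eq_norm_sq]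
      have h2 : ‖(-(1 / L)) • g0‖ ^ 2 = (1 / L) ^ 2 * ‖g0‖ ^ 2 := by
        rw [norm_smul, Real.norm_eq_abs, abs_neg, abs_of_pos (by positivity : (0:ℝ) < 1 / L),
          mul_pow]
      rw [h1, h2] at hd
      have h3 : V ystar ≤ V (y 0 + (-(1 / L)) • g0) := hmin _
      have h4 : μ * (V (y 0) - V ystar) ≤ (1 / 2) * ‖g0‖ ^ 2 := hPL (y 0)
      have h5 : L / 2 * ((1 / L) ^ 2 * ‖g0‖ ^ 2) = 1 / (2 * L) * ‖g0‖ ^ 2 := by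
        field_simp
      have e : 1 / L * ‖g0‖ ^ 2 - 1 / (2 * L) * ‖g0‖ ^ 2 = 1 / (2 * L) * ‖g0‖ ^ 2 := by
        field_simp
        ring
      -- V* ≤ V y0 − (1/(2L))‖g0‖²
      have h6 : 1 / (2 * L) * ‖g0‖ ^ 2 ≤ V (y 0) - V ystar := by linarith [hd, h3, h5, e]
      -- μ (V0 − V*) ≤ (1/2)‖g0‖² = L * (1/(2L))‖g0‖² ≤ L (V0 − V*)
      have h7 : μ * (V (y 0) - V ystar) ≤ L * (V (y 0) - V ystar) := by
        have e2 : L * (1 / (2 * L) * ‖g0‖ ^ 2) = (1 / 2) * ‖g0‖ ^ 2 := by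
          field_simp
        have e3 := mul_le_mul_of_nonneg_left h6 hL.le
        linarith [h4, e2, e3]
      nlinarith [h7, hpos]
    -- 1 − 2μc ≥ 0
    have hq0 : 0 ≤ 1 - 2 * μ * c := by
      have hcq1 : c * ε ^ 2 ≤ ε - L / 2 := by
        have hc1 : c ≤ 1 / ε - L / (2 * ε ^ 2) := hc ▸ min_le_left _ _
        have hfε : (1 / ε - L / (2 * ε ^ 2)) * ε ^ 2 = ε - L / 2 := by field_simp
        calc c * ε ^ 2 ≤ (1 / ε - L / (2 * ε ^ 2)) * ε ^ 2 :=
              mul_le_mul_of_nonneg_right hc1 (sq_nonneg ε)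
          _ = ε - L / 2 := hfε
      have key : 0 ≤ (1 - 2 * μ * c) * ε ^ 2 := by
        have e1 : 2 * μ * (c * ε ^ 2) ≤ 2 * μ * (ε - L / 2) :=
          mul_le_mul_of_nonneg_left hcq1 (by positivity)
        have e2 : μ * (2 * ε - L) ≤ L * (2 * ε - L) :=
          mul_le_mul_of_nonneg_right hμL (by linarith)
        linarith [sq_nonneg (ε - L), e1, e2]
      by_contra h
      push_neg at h
      have hneg := mul_neg_of_neg_of_pos h (pow_pos hεpos 2)
      linarith [key]
    induction k with
    | zero => simp
    | succ k ih =>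
      calc V (y (k + 1)) - V ystar ≤ (1 - 2 * μ * c) * (V (y k) - V ystar) := step k
        _ ≤ (1 - 2 * μ * c) * ((1 - 2 * μ * c) ^ k * (V (y 0) - V ystar)) :=
            mul_le_mul_of_nonneg_left ih hq0
        _ = (1 - 2 * μ * c) ^ (k + 1) * (V (y 0) - V ystar) := by
            rw [pow_succ]
            ring
end
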